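/- arXiv:1102.1606 — 2 statements merged into one kernel-verified Lean document; each statement's English description precedes it below -/
import Mathlib

section
/- Let p1 and p2 be primes, let s = 24 / gcd(24, (p1 - 1)*(p2 - 1)), and let δ ∈ {2, 3, 6} be a divisor of s. If p1 * p2 ≡ 1 (mod δ), then p1 ≡ -1 (mod δ) and p2 ≡ -1 (mod δ). -/
lemma aux3 (p1 p2 : ℕ) (hp1 : p1.Prime) (hp2 : p2.Prime)
    (h : ¬ (3 ∣ (p1 - 1) * (p2 - 1))) (hN : (p1 * p2) % 3 = 1) :
    p1 % 3 = 2 ∧ p2 % 3 = 2 := by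
  have h1 : ¬ (3 ∣ (p1 - 1)) := fun hh => h (hh.mul_right _)
  have h2 : ¬ (3 ∣ (p2 - 1)) := fun hh => h (hh.mul_left _)
  have d1 : ¬ (3 ∣ p1) := fun hh => by have := hh.mul_right p2; omega
  have d2 : ¬ (3 ∣ p2) := fun hh => by have := hh.mul_left p1; omega
  have := hp1.two_le; have := hp2.two_le
  omega

lemma aux2 (p1 p2 : ℕ) (hN : (p1 * p2) % 2 = 1) : p1 % 2 = 1 ∧ p2 % 2 = 1 := by
  have d1 : ¬ (2 ∣ p1) := fun hh => by have := hh.mul_right p2; omega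
  have d2 : ¬ (2 ∣ p2) := fun hh => by have := hh.mul_left p1; omega
  omega

lemma toInt (d p : ℕ) (h : d ∣ p + 1) : (p : ℤ) ≡ -1 [ZMOD (d : ℤ)] := by
  have h' : (d : ℤ) ∣ (p : ℤ) + 1 := by exact_mod_cast h
  refine Int.modEq_iff_dvd.mpr ?_
  rw [show (-1 : ℤ) - p = -((p : ℤ) + 1) by ring]
  exact dvd_neg.mpr h'

/-- Let `p1` and `p2` be primes, let `s = 24 / gcd(24, (p1-1)*(p2-1))`, and let
`δ ∈ {2, 3, 6}` be a divisor of `s`. If `p1 * p2 ≡ 1 (mod δ)`, then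
`p1 ≡ -1 (mod δ)` and `p2 ≡ -1 (mod δ)`. -/
theorem stmt0 (p1 p2 : ℕ) (hp1 : p1.Prime) (hp2 : p2.Prime)
    (δ : ℕ) (hδ : δ ∈ ({2, 3, 6} : Set ℕ))
    (hdvd : δ ∣ 24 / Nat.gcd 24 ((p1 - 1) * (p2 - 1)))
    (hN : ((p1 * p2 : ℕ) : ℤ) ≡ 1 [ZMOD (δ : ℤ)]) :
    (p1 : ℤ) ≡ -1 [ZMOD (δ : ℤ)] ∧ (p2 : ℤ) ≡ -1 [ZMOD (δ : ℤ)] := by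
  set g := Nat.gcd 24 ((p1 - 1) * (p2 - 1)) with hg
  have hg24 : g ∣ 24 := Nat.gcd_dvd_left _ _
  have hNat : p1 * p2 ≡ 1 [MOD δ] := Int.natCast_modEq_iff.mp (by exact_mod_cast hN)
  have hNat' : (p1 * p2) % δ = 1 % δ := hNat
  have h3 : 3 ∣ δ → ¬ (3 ∣ (p1 - 1) * (p2 - 1)) := by
    intro h3d hX
    have h3g : 3 ∣ g := Nat.dvd_gcd (by norm_num) hX
    have : (3 * 3 : ℕ) ∣ (24 / g) * g := mul_dvd_mul (h3d.trans hdvd) h3g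
    rw [Nat.div_mul_cancel hg24] at this
    omega
  simp only [Set.mem_insert_iff, Set.mem_singleton_iff] at hδ
  rcases hδ with rfl | rfl | rfl
  · have := aux2 p1 p2 (by omega)
    exact ⟨toInt 2 p1 (by omega), toInt 2 p2 (by omega)⟩
  · have := aux3 p1 p2 hp1 hp2 (h3 dvd_rfl) (by omega)
    exact ⟨toInt 3 p1 (by omega), toInt 3 p2 (by omega)⟩
  · have m2 := aux2 p1 p2 (by omega)
    have m3 := aux3 p1 p2 hp1 hp2 (h3 (by norm_num)) (by omega)
    exact ⟨toInt 6 p1 (by omega), toInt 6 p2 (by omega)⟩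
end

section
/- Let p > 3 be a prime. For each ν ∈ {1, …, p-1}, let μ(ν) be the unique element of {1, …, p-1} with μ(ν)*ν ≡ -1 (mod p), and set v(ν) = (1 + μ(ν)*ν)/p (an integer). Then -(p - 1)/2 + Σ_{ν=1}^{p-1} [ p*ν*(1 - μ(ν)²) + (-3*p + 2 + v(ν))*μ(ν) - 3 + 3*p ] ≡ -(p - 7)*(p - 1)²/2 (mod 24). -/
private lemma gauss_sum_icc (n : ℕ) :
    (∑ ν ∈ Finset.Icc 1 n, (ν : ℤ)) * 2 = (n : ℤ) * ((n : ℤ) + 1) := by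
  induction n with
  | zero => simp
  | succ n ih =>
    rw [Finset.sum_Icc_succ_top (by omega : 1 ≤ n + 1)]
    push_cast
    push_cast at ih
    linarith [ih]

/-- For a prime `p > 3`, with `μ(ν)` the unique element of `{1, …, p-1}` such
that `μ(ν)*ν ≡ -1 (mod p)` and `v(ν) = (1 + μ(ν)*ν)/p`, we have
`-(p-1)/2 + Σ_{ν=1}^{p-1} θ(ν) ≡ -(p-7)*(p-1)²/2 (mod 24)`, where
`θ(ν) = p*ν*(1 - μ(ν)²) + (-3p + 2 + v(ν))*μ(ν) - 3 + 3p`. -/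
theorem stmt12 (p : ℕ) (hp : p.Prime) (hp3 : 3 < p)
    (μ v : ℕ → ℤ)
    (hμ : ∀ ν ∈ Finset.Icc 1 (p - 1),
      1 ≤ μ ν ∧ μ ν ≤ (p : ℤ) - 1 ∧ (p : ℤ) * v ν = 1 + μ ν * (ν : ℤ)) :
    -(((p : ℤ) - 1) / 2) +
        ∑ ν ∈ Finset.Icc 1 (p - 1),
          ((p : ℤ) * (ν : ℤ) * (1 - (μ ν) ^ 2) +
            (-3 * (p : ℤ) + 2 + v ν) * (μ ν) - 3 + 3 * (p : ℤ)) ≡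
      -((p : ℤ) - 7) * ((p : ℤ) - 1) ^ 2 / 2 [ZMOD 24] := by
  obtain ⟨m, hm⟩ : ∃ m, p = 2 * m + 1 := hp.odd_of_ne_two (by omega)
  have hpz : (p : ℤ) = 2 * (m : ℤ) + 1 := by push_cast [hm]; ring
  set E := Finset.Icc 1 (p - 1) with hE
  -- involution property of μ (as a map on E via toNat)
  have hkey : ∀ ν ∈ E, (μ ν).toNat ∈ E ∧ μ ((μ ν).toNat) = (ν : ℤ) := by
    intro ν hν
    have hν' : 1 ≤ ν ∧ ν ≤ p - 1 := by simpa [hE, Finset.mem_Icc] using hν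
    obtain ⟨h1, h2, h3⟩ := hμ ν hν
    set j := (μ ν).toNat with hj
    have hjz : (j : ℤ) = μ ν := Int.toNat_of_nonneg (by linarith)
    have hjmem : j ∈ E := by
      rw [hE, Finset.mem_Icc]
      have hple : (1 : ℤ) ≤ (j : ℤ) := by omega
      have : (j : ℤ) ≤ (p : ℤ) - 1 := by rw [hjz]; exact h2
      omega
    refine ⟨hjmem, ?_⟩
    obtain ⟨g1, g2, g3⟩ := hμ j hjmem
    rw [hjz] at g3
    have hdvd : (p : ℤ) * (μ j * v ν - (ν : ℤ) * v j) = μ j - (ν : ℤ) := by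
      linear_combination (μ j) * h3 - (ν : ℤ) * g3
    set c := μ j * v ν - (ν : ℤ) * v j with hc
    have hνz1 : (1 : ℤ) ≤ (ν : ℤ) := by exact_mod_cast hν'.1
    have hνz2 : (ν : ℤ) ≤ (p : ℤ) - 1 := by
      have := hν'.2
      omega
    have hppos : (0 : ℤ) < (p : ℤ) := by positivity
    have hc0 : c = 0 := by
      rcases lt_trichotomy c 0 with h | h | h
      · have : (p : ℤ) * c ≤ (p : ℤ) * (-1) :=
          mul_le_mul_of_nonneg_left (by omega) (le_of_lt hppos)
        linarith
      · exact h
      · have : (p : ℤ) * 1 ≤ (p : ℤ) * c :=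
          mul_le_mul_of_nonneg_left (by omega) (le_of_lt hppos)
        linarith
    rw [hc0, mul_zero] at hdvd
    linarith
  -- μ permutes E, so ∑ μ = ∑ ν
  have hBA : (∑ ν ∈ E, μ ν) = ∑ ν ∈ E, (ν : ℤ) := by
    refine Finset.sum_nbij' (fun ν => (μ ν).toNat) (fun ν => (μ ν).toNat)
      (fun a ha => (hkey a ha).1) (fun a ha => (hkey a ha).1) ?_ ?_ ?_
    · intro a ha
      show (μ ((μ a).toNat)).toNat = a
      have := (hkey a ha).2
      omega
    · intro a ha
      show (μ ((μ a).toNat)).toNat = a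
      have := (hkey a ha).2
      omega
    · intro a ha
      show μ a = (((μ a).toNat : ℕ) : ℤ)
      have := (hμ a ha).1
      omega
  -- value of the Gauss sum
  have hcast : ((p - 1 : ℕ) : ℤ) = 2 * (m : ℤ) := by
    have h1 : 1 ≤ p := by omega
    omega
  have hA : (∑ ν ∈ E, (ν : ℤ)) = (m : ℤ) * (2 * (m : ℤ) + 1) := by
    have hg := gauss_sum_icc (p - 1)
    rw [hcast] at hg
    refine mul_right_cancel₀ (two_ne_zero) ?_
    rw [hg]; ring
  -- 24 ∣ p² - 1
  have h8 : (8 : ℤ) ∣ (p : ℤ) ^ 2 - 1 := by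
    rcases Nat.even_or_odd m with ⟨k, hk⟩ | ⟨k, hk⟩
    · exact ⟨(k : ℤ) * (2 * (k : ℤ) + 1), by rw [hpz]; push_cast [hk]; ring⟩
    · exact ⟨(2 * (k : ℤ) + 1) * ((k : ℤ) + 1), by rw [hpz]; push_cast [hk]; ring⟩
  have hnd3 : ¬ (3 ∣ p) := by
    intro h
    rcases (hp.eq_one_or_self_of_dvd 3 h) with h' | h' <;> omega
  have h3 : (3 : ℤ) ∣ (p : ℤ) ^ 2 - 1 := by
    have hmod : p % 3 = 1 ∨ p % 3 = 2 := by omega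
    set a := (p : ℤ) / 3 with ha
    rcases hmod with h | h
    · have hp' : (p : ℤ) = 3 * a + 1 := by omega
      exact ⟨a * (3 * a + 2), by rw [hp']; ring⟩
    · have hp' : (p : ℤ) = 3 * a + 2 := by omega
      exact ⟨(3 * a + 1) * (a + 1), by rw [hp']; ring⟩
  have h24 : (24 : ℤ) ∣ (p : ℤ) ^ 2 - 1 := by
    obtain ⟨x, hx⟩ := h8
    obtain ⟨y, hy⟩ := h3
    omega
  -- rewrite each summand using the defining relation of v
  have hterm : ∀ ν ∈ E,
      (p : ℤ) * (ν : ℤ) * (1 - (μ ν) ^ 2) + (-3 * (p : ℤ) + 2 + v ν) * (μ ν) - 3 + 3 * (p : ℤ)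
        = (p : ℤ) * (ν : ℤ) + (2 - 2 * (p : ℤ)) * μ ν
            + (1 - (p : ℤ) ^ 2) * (μ ν * v ν) + (3 * (p : ℤ) - 3) := by
    intro ν hν
    linear_combination ((p : ℤ) * μ ν) * ((hμ ν hν).2.2)
  rw [Finset.sum_congr rfl hterm]
  rw [Finset.sum_add_distrib, Finset.sum_add_distrib, Finset.sum_add_distrib,
    ← Finset.mul_sum, ← Finset.mul_sum, ← Finset.mul_sum, Finset.sum_const,
    nsmul_eq_mul, hBA, hA]
  have hcard : ((E.card : ℕ) : ℤ) = 2 * (m : ℤ) := by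
    rw [hE, Nat.card_Icc]
    omega
  rw [hcard]
  have hdiv1 : (((p : ℤ) - 1) / 2) = (m : ℤ) := by
    rw [hpz, show (2 * (m : ℤ) + 1 - 1) = 2 * m from by ring,
      Int.mul_ediv_cancel_left _ two_ne_zero]
  have hdiv2 : -((p : ℤ) - 7) * ((p : ℤ) - 1) ^ 2 / 2 = 12 * (m : ℤ) ^ 2 - 4 * (m : ℤ) ^ 3 := by
    rw [hpz, show -((2 * (m : ℤ) + 1) - 7) * ((2 * (m : ℤ) + 1) - 1) ^ 2
        = 2 * (12 * (m : ℤ) ^ 2 - 4 * (m : ℤ) ^ 3) from by ring,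
      Int.mul_ediv_cancel_left _ two_ne_zero]
  rw [hdiv1, hdiv2, Int.modEq_iff_dvd]
  have : 12 * (m : ℤ) ^ 2 - 4 * (m : ℤ) ^ 3 -
      (-(m : ℤ) + ((p : ℤ) * ((m : ℤ) * (2 * (m : ℤ) + 1))
        + (2 - 2 * (p : ℤ)) * ((m : ℤ) * (2 * (m : ℤ) + 1))
        + (1 - (p : ℤ) ^ 2) * (∑ ν ∈ E, μ ν * v ν) + 2 * (m : ℤ) * (3 * (p : ℤ) - 3)))
      = ((p : ℤ) ^ 2 - 1) * (∑ ν ∈ E, μ ν * v ν) := by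
    rw [hpz]; ring
  rw [this]
  exact h24.mul_right _
end
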